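/- Let (F, α) be a sheaf of k-modules on X equipped with a G-equivariant structure. Then there exist a sheaf J of k-modules on X which is an injective object of the abelian category Sh(X;k), a G-equivariant structure β on J, and a monomorphism i : F ⟶ J in Sh(X;k) which is G-equivariant, i.e. for every g ∈ G the composite of i with β_g equals the composite of α_g with (μ g)_*(i) : (μ g)_* F ⟶ (μ g)_* J. -/

import Mathlib

/-!
STATEMENT 9: Every `G`-equivariant sheaf `(F, α)` of `k`-modules on `X` admits a
`G`-equivariant monomorphism into an injective object of `Sh(X;k)` equipped with a
`G`-equivariant structure.
-/

open CategoryTheory CategoryTheory.Limits TopologicalSpace Opposite TopCat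

noncomputable section

variable (k : Type) [Field k] (X : TopCat.{0}) (G : Type) [Group G]
  [MulAction G X] [ContinuousConstSMul G X]

/-- The category `Sh(X;k)` of sheaves of `k`-modules on `X`. -/
abbrev Shv := CategoryTheory.Sheaf (Opens.grothendieckTopology X) (ModuleCat.{0} k)

instance : HasSheafify (Opens.grothendieckTopology X) (ModuleCat.{0} k) :=
  inferInstance

/-- The homeomorphism `x ↦ g • x` of `X` as a morphism of `TopCat`; `g ↦ mu g` is the
action homomorphism `μ : G → Homeo(X)`. -/
def mu (g : G) : X ⟶ X := TopCat.ofHom ⟨fun x => g • x, continuous_const_smul g⟩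

lemma mu_mul (g h : G) : mu X G (h * g) = mu X G g ≫ mu X G h := by
  ext x; exact mul_smul h g x

lemma mu_one : mu X G (1 : G) = 𝟙 X := by
  ext x; exact one_smul G x

/-- The pushforward functor `(μ g)_* : Sh(X;k) ⥤ Sh(X;k)`. -/
abbrev push (g : G) : Shv k X ⥤ Shv k X :=
  (Opens.map (mu X G g)).sheafPushforwardContinuous (ModuleCat.{0} k)
    (Opens.grothendieckTopology X) (Opens.grothendieckTopology X)

/-- A `G`-equivariant structure on a sheaf `F` of `k`-modules on `X`: a family of
isomorphisms `α_g : F ≅ (μ g)_* F` in `Sh(X;k)` such that `α_1` is the canonical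
identification `F ≅ (μ 1)_* F` and such that, for all `g h : G`,
`α_{hg}` equals the composite of `α_h` with `(μ h)_*(α_g)`, modulo the canonical
isomorphism `(μ h)_*((μ g)_* F) ≅ (μ(hg))_* F` (the cocycle condition). -/
structure EquivariantStructure (F : Shv k X) where
  iso : ∀ g : G, F ≅ (push k X G g).obj F
  one : (iso 1).hom.hom = (TopCat.Presheaf.pushforwardEq (mu_one X G).symm F.val).hom
  cocycle : ∀ g h : G, (iso (h * g)).hom.hom =
    (iso h).hom.hom ≫ (TopCat.Presheaf.pushforward (ModuleCat.{0} k) (mu X G h)).map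
      (iso g).hom.hom ≫ (TopCat.Presheaf.pushforwardEq (mu_mul X G g h).symm F.val).hom

variable {k X G}

/-- `τ_g(U) : F(U) ⟶ F(g⁻¹ • U)`, the `U`-component of the isomorphism `α_g`, using the
identification `((μ g)_* F)(U) = F(g⁻¹ • U)` (note `(μ g)⁻¹(U) = g⁻¹ • U`). -/
def tau {F : Shv k X} (e : EquivariantStructure k X G F) (g : G) (U : Opens X) :
    F.val.obj (op U) ⟶ F.val.obj (op ((Opens.map (mu X G g)).obj U)) :=
  (e.iso g).hom.hom.app (op U)

/-!
Embed `F` into an injective sheaf `Q` (`Sh(X;k)` is a Grothendieck abelian category, so it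
has enough injectives) and then into the coinduced sheaf `∏_{a : G} (μ a)_* Q` through the
components `α_a ≫ (μ a)_* ι`. The coinduced sheaf is injective because each `(μ a)_*` is an
equivalence with inverse `(μ a⁻¹)_*`; its equivariant structure reindexes the product along
`a ↦ g * a`, and the equivariance of the embedding is the cocycle condition for `α`.
-/

open TopCat.Presheaf

lemma CategoryTheory.ObjectProperty.FullSubcategory.eqToHom_hom {C : Type*} [Category C]
    {P : ObjectProperty C} {S T : P.FullSubcategory} (e : S = T) :
    (eqToHom e).hom = eqToHom (congrArg ObjectProperty.FullSubcategory.obj e) := by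
  subst e; rfl

lemma TopCat.Presheaf.pushforwardEq_hom_eq_eqToHom {C : Type*} [Category C]
    {Y Z : TopCat} {f f' : Y ⟶ Z} (e : f = f') (ℱ : Y.Presheaf C) :
    (pushforwardEq e ℱ).hom = eqToHom (pushforward_eq' e ℱ) := by
  subst e; ext U; simp; rfl

namespace EquivariantSheaf

variable (k X) in
lemma push_mul (g h : G) : push k X G (h * g) = push k X G g ⋙ push k X G h := by
  simp only [push, mu_mul]; rfl

variable (k X G) in
lemma push_one : push k X G 1 = 𝟭 (Shv k X) := by
  simp only [push, mu_one]; rfl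

lemma push_obj_mul (g h : G) (S : Shv k X) :
    (push k X G (h * g)).obj S = (push k X G h).obj ((push k X G g).obj S) :=
  Functor.congr_obj (push_mul k X g h) S

lemma push_obj_one (S : Shv k X) : (push k X G 1).obj S = S :=
  Functor.congr_obj (push_one k X G) S

instance (g : G) : (push k X G g).IsEquivalence :=
  .mk' (push k X G g⁻¹)
    (eqToIso (by rw [← push_mul, inv_mul_cancel, push_one]))
    (eqToIso (by rw [← push_mul, mul_inv_cancel, push_one]))

end EquivariantSheaf

namespace EquivariantStructure

open EquivariantSheaf

variable {F : Shv k X}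

lemma iso_mul_hom (α : EquivariantStructure k X G F) (g h : G) :
    (α.iso (h * g)).hom = (α.iso h).hom ≫ (push k X G h).map (α.iso g).hom ≫
      eqToHom (push_obj_mul g h F).symm := by
  ext1
  rw [α.cocycle, ObjectProperty.FullSubcategory.comp_hom, ObjectProperty.FullSubcategory.comp_hom,
    ObjectProperty.FullSubcategory.eqToHom_hom, pushforwardEq_hom_eq_eqToHom]
  rfl

def mk' (iso : ∀ g : G, F ≅ (push k X G g).obj F)
    (one : (iso 1).hom = eqToHom (push_obj_one F).symm)
    (mul : ∀ g h : G, (iso (h * g)).hom =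
      (iso h).hom ≫ (push k X G h).map (iso g).hom ≫ eqToHom (push_obj_mul g h F).symm) :
    EquivariantStructure k X G F where
  iso := iso
  one := by
    rw [one, ObjectProperty.FullSubcategory.eqToHom_hom, pushforwardEq_hom_eq_eqToHom]
    rfl
  cocycle g h := by
    rw [mul, ObjectProperty.FullSubcategory.comp_hom, ObjectProperty.FullSubcategory.comp_hom,
      ObjectProperty.FullSubcategory.eqToHom_hom, pushforwardEq_hom_eq_eqToHom]
    rfl

end EquivariantStructure

namespace EquivariantSheaf

variable (G) in
abbrev coind (Q : Shv k X) : Shv k X := ∏ᶜ fun a : G => (push k X G a).obj Q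

def coindIso (g : G) (Q : Shv k X) : coind G Q ≅ (push k X G g).obj (coind G Q) :=
  Pi.whiskerEquiv (Equiv.mulLeft g).symm (fun a => eqToIso (by simp [← push_obj_mul])) ≪≫
    (PreservesProduct.iso (push k X G g) _).symm

lemma coindIso_hom_map_π (g a : G) (Q : Shv k X) :
    (coindIso g Q).hom ≫ (push k X G g).map (Pi.π _ a) =
      Pi.π _ (g * a) ≫ eqToHom (push_obj_mul a g Q) := by
  rw [← piComparison_comp_π, coindIso, Iso.trans_hom, Iso.symm_hom, ← PreservesProduct.iso_hom,
    Category.assoc, Iso.inv_hom_id_assoc, Pi.whiskerEquiv_hom, Pi.map'_comp_π, eqToIso.inv,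
    eqToHom_trans]
  rfl

lemma push_map_coind_hom_ext {g : G} {Q T : Shv k X} {u v : T ⟶ (push k X G g).obj (coind G Q)}
    (h : ∀ a, u ≫ (push k X G g).map (Pi.π _ a) = v ≫ (push k X G g).map (Pi.π _ a)) :
    u = v := by
  rw [← cancel_mono (piComparison (push k X G g) _)]
  refine Pi.hom_ext _ _ fun a => ?_
  simpa using h a

lemma coindIso_one_hom (Q : Shv k X) :
    (coindIso 1 Q).hom = eqToHom (push_obj_one (coind G Q)).symm := by
  refine push_map_coind_hom_ext fun a => ?_
  rw [coindIso_hom_map_π, Functor.congr_hom (push_one k X G)]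
  simp only [Functor.id_map, eqToHom_trans_assoc, eqToHom_refl, Category.id_comp]
  rw [← Pi.π_comp_eqToHom (fun b : G => (push k X G b).obj Q) (one_mul a), Category.assoc,
    eqToHom_trans]

lemma coindIso_mul_hom (g h : G) (Q : Shv k X) :
    (coindIso (h * g) Q).hom = (coindIso h Q).hom ≫ (push k X G h).map (coindIso g Q).hom ≫
      eqToHom (push_obj_mul g h (coind G Q)).symm := by
  refine push_map_coind_hom_ext fun a => ?_
  rw [coindIso_hom_map_π, Functor.congr_hom (push_mul k X g h)]
  simp only [Functor.comp_map, Category.assoc, eqToHom_trans_assoc, eqToHom_refl, Category.id_comp,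
    ← Functor.map_comp_assoc, coindIso_hom_map_π, Functor.map_comp, eqToHom_map]
  rw [← Category.assoc, coindIso_hom_map_π,
    ← Pi.π_comp_eqToHom (fun b : G => (push k X G b).obj Q) (mul_assoc h g a)]
  simp only [Category.assoc, eqToHom_trans]

def coindStructure (Q : Shv k X) : EquivariantStructure k X G (coind G Q) :=
  .mk' (fun g => coindIso g Q) (coindIso_one_hom Q) (fun g h => coindIso_mul_hom g h Q)

/-- The transpose of `f` under the adjunction between forgetting the equivariant structure and
coinduction. -/
def coindLift {F Q : Shv k X} (α : EquivariantStructure k X G F) (f : F ⟶ Q) :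
    F ⟶ coind G Q :=
  Pi.lift fun a => (α.iso a).hom ≫ (push k X G a).map f

instance {F Q : Shv k X} (α : EquivariantStructure k X G F) (f : F ⟶ Q) [Mono f] :
    Mono (coindLift α f) :=
  have : Mono (coindLift α f ≫ Pi.π _ 1) := by rw [coindLift, Pi.lift_π]; infer_instance
  mono_of_mono _ (Pi.π _ 1)

lemma coindLift_comp_coindIso_hom {F Q : Shv k X} (α : EquivariantStructure k X G F)
    (f : F ⟶ Q) (g : G) :
    coindLift α f ≫ (coindIso g Q).hom =
      (α.iso g).hom ≫ (push k X G g).map (coindLift α f) := by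
  refine push_map_coind_hom_ext fun a => ?_
  simp only [coindLift, Category.assoc, coindIso_hom_map_π, Pi.lift_π_assoc, α.iso_mul_hom,
    ← Functor.map_comp, Pi.lift_π, Functor.congr_hom (push_mul k X a g)]
  simp

end EquivariantSheaf

/-- there exist a sheaf `J` which is injective in `Sh(X;k)`, a `G`-equivariant
structure `β` on `J`, and a monomorphism `i : F ⟶ J` which is `G`-equivariant, i.e.
`i ≫ β_g = α_g ≫ (μ g)_*(i)` for every `g`. -/
theorem exists_equivariant_injective_embedding {F : Shv k X}
    (α : EquivariantStructure k X G F) :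
    ∃ (J : Shv k X) (β : EquivariantStructure k X G J) (i : F ⟶ J),
      Injective J ∧ Mono i ∧
      ∀ g : G, i ≫ (β.iso g).hom = (α.iso g).hom ≫ (push k X G g).map i :=
  ⟨EquivariantSheaf.coind G (Injective.under F), EquivariantSheaf.coindStructure _,
    EquivariantSheaf.coindLift α (Injective.ι F), inferInstance, inferInstance,
    EquivariantSheaf.coindLift_comp_coindIso_hom α _⟩
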